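/- Filters are closed under composition: for any two filters f_{v,k} and f_{v',k'} on Boolean vectors of length n, there exists a pattern v'' such that (v'', k + k') satisfies the filter side condition and f_{v,k} ∘ f_{v',k'} = f_{v'',k+k'}. -/
import Mathlib


/-- The four pattern entries of a filter. -/
inductive Pat where
  | bot | top | id | neg
deriving DecidableEq

/-- Side condition for a filter: whenever `i + k` is out of range,
the pattern entry must be a constant (`bot` or `top`). -/
def FilterOK {n : ℕ} (v : Fin n → Pat) (k : ℤ) : Prop :=
  ∀ i : Fin n, ¬(0 ≤ (i : ℤ) + k ∧ (i : ℤ) + k < n) → v i = Pat.bot ∨ v i = Pat.top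

/-- The function computed by the filter with pattern `v` and offset `k`. -/
def filterFun {n : ℕ} (v : Fin n → Pat) (k : ℤ) (p : Fin n → Bool) (i : Fin n) : Bool :=
  match v i with
  | Pat.bot => false
  | Pat.top => true
  | Pat.id =>
      if h : 0 ≤ (i : ℤ) + k ∧ (i : ℤ) + k < n then p ⟨((i : ℤ) + k).toNat, by omega⟩
      else false
  | Pat.neg =>
      if h : 0 ≤ (i : ℤ) + k ∧ (i : ℤ) + k < n then !(p ⟨((i : ℤ) + k).toNat, by omega⟩)
      else false

/-- Negate a pattern entry. -/
def Pat.flip : Pat → Pat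
  | .bot => .top
  | .top => .bot
  | .id => .neg
  | .neg => .id

/-- The composed pattern. -/
def compPat {n : ℕ} (v v' : Fin n → Pat) (k : ℤ) (i : Fin n) : Pat :=
  match v i with
  | Pat.bot => Pat.bot
  | Pat.top => Pat.top
  | Pat.id =>
      if h : 0 ≤ (i : ℤ) + k ∧ (i : ℤ) + k < n then v' ⟨((i : ℤ) + k).toNat, by omega⟩
      else Pat.bot
  | Pat.neg =>
      if h : 0 ≤ (i : ℤ) + k ∧ (i : ℤ) + k < n then (v' ⟨((i : ℤ) + k).toNat, by omega⟩).flip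
      else Pat.bot

theorem stmt15 (n : ℕ) (hn : 1 ≤ n)
    (v v' : Fin n → Pat) (k k' : ℤ) (hv : FilterOK v k) (hv' : FilterOK v' k') :
    ∃ v'' : Fin n → Pat, FilterOK v'' (k + k') ∧
      filterFun v k ∘ filterFun v' k' = filterFun v'' (k + k') := by
  refine ⟨compPat v v' k, ?_, ?_⟩
  · intro i hi
    unfold compPat
    cases hvi : v i with
    | bot => left; rfl
    | top => right; rfl
    | id =>
      by_cases h1 : 0 ≤ (i : ℤ) + k ∧ (i : ℤ) + k < n
      · simp only [h1, dif_pos]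
        apply hv'
        push_cast [Int.toNat_of_nonneg h1.1]
        omega
      · simp [h1]
    | neg =>
      by_cases h1 : 0 ≤ (i : ℤ) + k ∧ (i : ℤ) + k < n
      · simp only [h1, dif_pos]
        have := hv' ⟨((i : ℤ) + k).toNat, by omega⟩ (by
          push_cast [Int.toNat_of_nonneg h1.1]; omega)
        rcases this with h | h <;> simp [h, Pat.flip]
      · simp [h1]
  · funext p i
    simp only [Function.comp_apply]
    unfold filterFun compPat
    cases hvi : v i with
    | bot => rfl
    | top => rfl
    | id =>
      by_cases h1 : 0 ≤ (i : ℤ) + k ∧ (i : ℤ) + k < n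
      · rw [dif_pos h1]
        cases hvj : v' ⟨((i : ℤ) + k).toNat, by omega⟩ <;>
          simp only [hvj, dif_pos h1, if_pos h1, Int.toNat_of_nonneg h1.1, add_assoc] <;> rfl
      · rcases hv i h1 with h | h <;> simp [h] at hvi
    | neg =>
      by_cases h1 : 0 ≤ (i : ℤ) + k ∧ (i : ℤ) + k < n
      · rw [dif_pos h1]
        cases hvj : v' ⟨((i : ℤ) + k).toNat, by omega⟩ <;>
          simp only [hvj, Pat.flip, dif_pos h1, if_pos h1, Int.toNat_of_nonneg h1.1, add_assoc,
            Bool.not_false, Bool.not_true] <;>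
          first
            | rfl
            | (by_cases h2 : 0 ≤ (i : ℤ) + (k + k') ∧ (i : ℤ) + (k + k') < n <;>
                simp [h2] <;>
                (rcases hv' ⟨((i : ℤ) + k).toNat, by omega⟩
                    (by simp only [Fin.val_mk, Int.toNat_of_nonneg h1.1]; omega)
                  with h | h <;> simp [h] at hvj))
      · rcases hv i h1 with h | h <;> simp [h] at hvi
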